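/- (Proposition 4.1) Let d ≥ 1, n ≥ 1, r > 0. Let f^dis : ℤ^d → M(n,ℂ) vanish outside B_r ∩ ℤ^d, let w : ℤ^d → (0,∞), and for each z ∈ B_r ∩ ℤ^d let ρ_z > 0 be such that the closed balls B̄(z, ρ_z), z ∈ B_r ∩ ℤ^d, are pairwise disjoint. Define f : ℝ^d → M(n,ℂ) by f(x) = Σ_{z ∈ B_r ∩ ℤ^d} w(z) f^dis(z) 𝟙_{B̄(z,ρ_z)}(x). Let x_0 ∈ ℝ^d, θ ∈ S^{d-1}, and suppose the line γ = {x_0 + sθ : s ∈ ℝ} satisfies: for every z ∈ B_r ∩ ℤ^d, either z ∈ γ or γ ∩ B̄(z, ρ_z) = ∅. Then there exist R > 0 and a continuous function ψ : ℝ → M(n,ℂ) such that ψ is differentiable at all but finitely many s ∈ ℝ with derivative ψ'(s) = f(x_0 + sθ) · ψ(s), ψ(s) = I for all s ≤ −R, and for all s ≥ R, ψ(s) equals the ordered product of exp(2 ρ_z w(z) f^dis(z)) over the points z ∈ γ ∩ B_r ∩ ℤ^d, multiplied so that the point z with the largest parameter (z − x_0)·θ contributes the leftmost factor. -/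

import Mathlib

noncomputable section

open Matrix

/-- Embedding of the lattice `ℤ^d` into Euclidean `ℝ^d`. -/
def emb {d : ℕ} (z : Fin d → ℤ) : EuclideanSpace ℝ (Fin d) := WithLp.toLp 2 (fun i => (z i : ℝ))

/- Ordered product of `Φ` over `supp`: the factors are multiplied so that larger values
of `key` contribute factors further to the left (the value is `1` if no strictly
`key`-decreasing enumeration of `supp` by a list exists). -/
open Classical in
noncomputable def oprodBy {α G : Type*} [Monoid G] (Φ : α → G) (key : α → ℝ) (supp : Set α) : G :=
  if h : ∃ l : List α, l.Pairwise (fun a b => key b < key a) ∧ ∀ a, a ∈ l ↔ a ∈ supp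
  then (h.choose.map Φ).prod else 1

/-- The discrete non-abelian X-ray transform of `F` along the oriented line through `x`
with direction `θ`: the ordered product of `F y` over lattice points `y` on the line,
the point furthest along the orientation contributing the leftmost factor. -/
noncomputable def discS {d : ℕ} {G : Type*} [Monoid G] (F : (Fin d → ℤ) → G)
    (x θ : EuclideanSpace ℝ (Fin d)) : G :=
  oprodBy F (fun z => ∑ i, ((z i : ℝ) - x i) * θ i)
    {z | (∃ t : ℝ, emb z = x + t • θ) ∧ F z ≠ 1}

/-!
Along the line `s ↦ x₀ + s θ`, the coefficient `f` is a step function: it equals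
`w z • fdis z` on the parameter interval `[t_z - ρ_z, t_z + ρ_z]` of each lattice point `z`
on the line and vanishes elsewhere, and by the disjointness of the balls these intervals are
pairwise disjoint. The ordered product of `exp ((s - a) • A)`, with `s` clamped to the interval
`[a, b]` of each factor, then solves `ψ' = f ψ` away from the endpoints: at each time at most
one factor moves, and the factors to its left are still `1`. Beyond the last interval every
factor has become `exp ((b - a) • A) = exp (2 ρ_z w_z fdis z)`.
-/

open NormedSpace Set Filter Topology

theorem Set.Finite.exists_list_pairwise_of_injOn {α β : Type*} [LinearOrder β] {S : Set α}
    (hS : S.Finite) {key : α → β} (hinj : S.InjOn key) :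
    ∃ l : List α, l.Pairwise (fun a b => key b < key a) ∧ ∀ a, a ∈ l ↔ a ∈ S := by
  set l := hS.toFinset.toList.mergeSort fun a b => decide (key b ≤ key a)
  have hmem : ∀ a, a ∈ l ↔ a ∈ S := by simp [l, List.mem_mergeSort]
  have hsorted : l.Pairwise fun a b => key b ≤ key a := by
    simpa using List.pairwise_mergeSort (le := fun a b => decide (key b ≤ key a))
      (by simp only [decide_eq_true_eq]; exact fun _ _ _ h₁ h₂ => h₂.trans h₁)
      (by simp [le_total]) _
  have hnodup : l.Nodup := (List.mergeSort_perm _ _).nodup_iff.2 (Finset.nodup_toList _)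
  refine ⟨l, (hsorted.and hnodup).imp_of_mem fun ha hb h => h.1.lt_of_ne fun he => h.2 ?_, hmem⟩
  exact (hinj ((hmem _).1 hb) ((hmem _).1 ha) he).symm

theorem oprodBy_eq_prod {α G : Type*} [Monoid G] (Φ : α → G) (key : α → ℝ) {S : Set α}
    {l : List α} (hl : l.Pairwise fun a b => key b < key a) (hmem : ∀ a, a ∈ l ↔ a ∈ S) :
    oprodBy Φ key S = (l.map Φ).prod := by
  have h : ∃ l' : List α, l'.Pairwise (fun a b => key b < key a) ∧ ∀ a, a ∈ l' ↔ a ∈ S :=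
    ⟨l, hl, hmem⟩
  have : Std.Antisymm fun a b : α => key b < key a :=
    ⟨fun _ _ h h' => absurd (h.trans h') (lt_irrefl _)⟩
  have : Std.Irrefl fun a b : α => key b < key a := ⟨fun _ => lt_irrefl _⟩
  rw [oprodBy, dif_pos h,
    h.choose_spec.1.eq_of_mem_iff hl fun a => (h.choose_spec.2 a).trans (hmem a).symm]

section StepSum

variable {ι M : Type*} [AddCommMonoid M]

def stepSum (a b : ι → ℝ) (A : ι → M) (l : List ι) (s : ℝ) : M :=
  (l.map fun i => (Icc (a i) (b i)).indicator (fun _ => A i) s).sum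

theorem stepSum_cons (a b : ι → ℝ) (A : ι → M) (i : ι) (l : List ι) (s : ℝ) :
    stepSum a b A (i :: l) s = (Icc (a i) (b i)).indicator (fun _ => A i) s + stepSum a b A l s :=
  List.sum_cons

end StepSum

section RampExp

variable {𝔸 : Type*} [NormedRing 𝔸] [NormedAlgebra ℝ 𝔸]

def rampExp (a b : ℝ) (A : 𝔸) (s : ℝ) : 𝔸 := exp ((max a (min s b) - a) • A)

theorem rampExp_of_le {a b s : ℝ} (A : 𝔸) (h : s ≤ a) : rampExp a b A s = 1 := by
  rw [rampExp, max_eq_left ((min_le_left s b).trans h), sub_self, zero_smul, exp_zero]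

theorem rampExp_of_ge {a b s : ℝ} (A : 𝔸) (hab : a ≤ b) (h : b ≤ s) :
    rampExp a b A s = exp ((b - a) • A) := by
  rw [rampExp, min_eq_right h, max_eq_right hab]

variable [CompleteSpace 𝔸]

theorem continuous_rampExp (a b : ℝ) (A : 𝔸) : Continuous (rampExp a b A) :=
  (continuous_iff_continuousAt.2 fun u => (hasDerivAt_exp_smul_const' A u).continuousAt).comp
    (by fun_prop : Continuous fun s : ℝ => max a (min s b) - a)

theorem hasDerivAt_rampExp {a b s : ℝ} (A : 𝔸) (ha : s ≠ a) (hb : s ≠ b) :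
    HasDerivAt (rampExp a b A) ((Icc a b).indicator (fun _ => A) s * rampExp a b A s) s := by
  rcases ha.lt_or_gt with hsa | has
  · have hconst : rampExp a b A =ᶠ[𝓝 s] fun _ => 1 := by
      filter_upwards [Iio_mem_nhds hsa] with u hu using rampExp_of_le A hu.le
    rw [indicator_of_notMem (fun h => hsa.not_ge h.1), zero_mul]
    exact (hasDerivAt_const s 1).congr_of_eventuallyEq hconst
  rcases hb.lt_or_gt with hsb | hbs
  · have hinside : rampExp a b A =ᶠ[𝓝 s] fun u => exp ((u - a) • A) := by
      filter_upwards [Ioo_mem_nhds has hsb] with u hu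
      rw [rampExp, min_eq_left hu.2.le, max_eq_right hu.1.le]
    rw [indicator_of_mem (mem_Icc.2 ⟨has.le, hsb.le⟩), hinside.eq_of_nhds]
    exact (hasDerivAt_exp_smul_const' A (s - a)).comp_sub_const s a |>.congr_of_eventuallyEq
      hinside
  · have hconst : rampExp a b A =ᶠ[𝓝 s] fun _ => rampExp a b A s := by
      filter_upwards [Ioi_mem_nhds hbs] with u hu
      rw [rampExp, rampExp, min_eq_right hu.le, min_eq_right hbs.le]
    rw [indicator_of_notMem (fun h => hbs.not_ge h.2), zero_mul]
    exact (hasDerivAt_const s _).congr_of_eventuallyEq hconst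

end RampExp

section RampProd

variable {ι 𝔸 : Type*} [NormedRing 𝔸] [NormedAlgebra ℝ 𝔸] {a b : ι → ℝ} {A : ι → 𝔸}

def rampProd (a b : ι → ℝ) (A : ι → 𝔸) (l : List ι) (s : ℝ) : 𝔸 :=
  (l.map fun i => rampExp (a i) (b i) (A i) s).prod

@[simp]
theorem rampProd_nil : rampProd a b A [] = fun _ => 1 := rfl

theorem rampProd_cons (i : ι) (l : List ι) :
    rampProd a b A (i :: l) = rampExp (a i) (b i) (A i) * rampProd a b A l := rfl

theorem rampProd_eq_one {l : List ι} {s : ℝ} (h : ∀ i ∈ l, s ≤ a i) :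
    rampProd a b A l s = 1 :=
  List.prod_eq_one fun _ hx => by
    obtain ⟨i, hi, rfl⟩ := List.mem_map.1 hx
    exact rampExp_of_le _ (h i hi)

theorem rampProd_eq_prod_exp {l : List ι} {s : ℝ} (h : ∀ i ∈ l, a i ≤ b i ∧ b i ≤ s) :
    rampProd a b A l s = (l.map fun i => exp ((b i - a i) • A i)).prod :=
  congrArg List.prod <| List.map_congr_left fun i hi => rampExp_of_ge _ (h i hi).1 (h i hi).2

theorem exists_rampProd_eq_one_and_eq_prod_exp {l : List ι} (hab : ∀ i ∈ l, a i ≤ b i) :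
    ∃ R > 0, (∀ s ≤ -R, rampProd a b A l s = 1) ∧
      ∀ s ≥ R, rampProd a b A l s = (l.map fun i => exp ((b i - a i) • A i)).prod := by
  classical
  obtain ⟨M, hM⟩ := (l.toFinset.image fun i => max |a i| |b i|).exists_le
  have hbound : ∀ i ∈ l, |a i| ≤ max M 1 ∧ |b i| ≤ max M 1 := fun i hi =>
    max_le_iff.1 ((hM _ (Finset.mem_image_of_mem _ (List.mem_toFinset.2 hi))).trans
      (le_max_left _ _))
  refine ⟨max M 1, by positivity, fun s hs => rampProd_eq_one fun i hi => ?_,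
    fun s hs => rampProd_eq_prod_exp fun i hi => ⟨hab i hi, ?_⟩⟩
  · linarith [neg_abs_le (a i), (hbound i hi).1]
  · linarith [le_abs_self (b i), (hbound i hi).2]

/-- Either the factor for `i` is still `1`, or `s` lies beyond every interval of `l`, where the
step function vanishes. -/
theorem commute_rampExp_stepSum {i : ι} {l : List ι} (hi : ∀ j ∈ l, b j < a i) (s : ℝ) :
    Commute (rampExp (a i) (b i) (A i) s) (stepSum a b A l s) := by
  rcases le_or_gt s (a i) with hs | hs
  · rw [rampExp_of_le _ hs]
    exact Commute.one_left _
  · have hzero : stepSum a b A l s = 0 := List.sum_eq_zero fun _ hx => by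
      obtain ⟨j, hj, rfl⟩ := List.mem_map.1 hx
      exact indicator_of_notMem (fun h => (h.2.trans_lt ((hi j hj).trans hs)).false) _
    rw [hzero]
    exact Commute.zero_right _

variable [CompleteSpace 𝔸]

theorem continuous_rampProd (a b : ι → ℝ) (A : ι → 𝔸) (l : List ι) :
    Continuous (rampProd a b A l) :=
  continuous_list_prod l fun i _ => continuous_rampExp (a i) (b i) (A i)

theorem hasDerivAt_rampProd {l : List ι} (hl : l.Pairwise fun i j => b j < a i) {s : ℝ}
    (hs : ∀ i ∈ l, s ≠ a i ∧ s ≠ b i) :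
    HasDerivAt (rampProd a b A l) (stepSum a b A l s * rampProd a b A l s) s := by
  induction l with
  | nil => simpa [stepSum] using hasDerivAt_const s (1 : 𝔸)
  | cons i l ih =>
    rw [List.pairwise_cons] at hl
    obtain ⟨hsa, hsb⟩ := hs i List.mem_cons_self
    have hprod := (hasDerivAt_rampExp (A i) hsa hsb).mul
      (ih hl.2 fun j hj => hs j (List.mem_cons_of_mem _ hj))
    rw [rampProd_cons]
    convert hprod using 1
    rw [stepSum_cons, Pi.mul_apply, add_mul, ← mul_assoc (rampExp _ _ _ s),
      (commute_rampExp_stepSum hl.1 s).eq]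
    simp only [mul_assoc]

end RampProd

theorem HasDerivAt.matrix_apply {𝕜 m n α : Type*} [NontriviallyNormedField 𝕜] [Fintype m]
    [Fintype n] [NormedAddCommGroup α] [NormedSpace 𝕜 α] {ψ : 𝕜 → Matrix m n α}
    {ψ' : Matrix m n α} {s : 𝕜} (h : HasDerivAt ψ ψ' s) (i : m) (j : n) :
    HasDerivAt (fun u => ψ u i j) (ψ' i j) s :=
  hasDerivAt_pi.1 (hasDerivAt_pi.1 h i) j

section Line

variable {E : Type*} [SeminormedAddCommGroup E] [NormedSpace ℝ E]

theorem isometry_add_smul (x : E) {θ : E} (hθ : ‖θ‖ = 1) : Isometry fun s : ℝ => x + s • θ :=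
  Isometry.of_dist_eq fun s t => by
    rw [dist_add_left, dist_eq_norm, ← sub_smul, norm_smul, hθ, mul_one, Real.dist_eq,
      Real.norm_eq_abs]

theorem preimage_add_smul_closedBall (x : E) {θ : E} (hθ : ‖θ‖ = 1) (t ρ : ℝ) :
    (fun s : ℝ => x + s • θ) ⁻¹' Metric.closedBall (x + t • θ) ρ = Icc (t - ρ) (t + ρ) := by
  rw [(isometry_add_smul x hθ).preimage_closedBall, Real.closedBall_eq_Icc]

theorem add_lt_sub_of_disjoint_closedBall (x : E) {θ : E} (hθ : ‖θ‖ = 1) {t₁ t₂ ρ₁ ρ₂ : ℝ}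
    (hρ₁ : 0 ≤ ρ₁) (hρ₂ : 0 ≤ ρ₂) (ht : t₁ < t₂)
    (h : Disjoint (Metric.closedBall (x + t₁ • θ) ρ₁) (Metric.closedBall (x + t₂ • θ) ρ₂)) :
    t₁ + ρ₁ < t₂ - ρ₂ := by
  have hdist := (disjoint_closedBall_closedBall_iff hρ₁ hρ₂).1 h
  rw [(isometry_add_smul x hθ).dist_eq, Real.dist_eq, abs_of_neg (sub_neg.2 ht)] at hdist
  linarith

end Line

section Lattice

variable {d : ℕ}

theorem emb_injective : Function.Injective (emb (d := d)) := fun z₁ z₂ h =>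
  funext fun i => by simpa [emb] using congrArg (fun v => v i) h

theorem finite_setOf_norm_emb_le (d : ℕ) (r : ℝ) : {z : Fin d → ℤ | ‖emb z‖ ≤ r}.Finite := by
  refine (Set.finite_Icc (-fun _ => ⌈r⌉) fun _ => ⌈r⌉).subset fun z hz => ?_
  have hcoord : ∀ i, |(z i : ℝ)| ≤ ⌈r⌉ := fun i =>
    ((PiLp.norm_apply_le (emb z) i).trans hz).trans (Int.le_ceil r)
  exact ⟨fun i => by exact_mod_cast (abs_le.1 (hcoord i)).1,
    fun i => by exact_mod_cast (abs_le.1 (hcoord i)).2⟩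

def lineParam (x θ : EuclideanSpace ℝ (Fin d)) (z : Fin d → ℤ) : ℝ :=
  ∑ i, ((z i : ℝ) - x i) * θ i

theorem lineParam_eq {x θ : EuclideanSpace ℝ (Fin d)} (hθ : ‖θ‖ = 1) {z : Fin d → ℤ} {t : ℝ}
    (h : emb z = x + t • θ) : lineParam x θ z = t := by
  have hz : ∀ i, (z i : ℝ) - x i = t * θ i := fun i => by
    have := congrArg (fun v => v i) h
    simp only [emb, PiLp.add_apply, PiLp.smul_apply, smul_eq_mul] at this
    linarith
  have hθθ : ∑ i, θ i * θ i = 1 := by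
    have := real_inner_self_eq_norm_sq θ
    rw [hθ, PiLp.inner_apply] at this
    simpa [sq] using this
  simp only [lineParam, hz, mul_assoc, ← Finset.mul_sum, hθθ, mul_one]

theorem emb_eq_add_lineParam_smul {x θ : EuclideanSpace ℝ (Fin d)} (hθ : ‖θ‖ = 1)
    {z : Fin d → ℤ} (h : ∃ t : ℝ, emb z = x + t • θ) : emb z = x + lineParam x θ z • θ := by
  obtain ⟨t, ht⟩ := h
  rwa [lineParam_eq hθ ht]

end Lattice

section Configuration

variable {d : ℕ} {r : ℝ} {x₀ θ : EuclideanSpace ℝ (Fin d)}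

theorem exists_list_pairwise_lineParam (hθ : ‖θ‖ = 1) :
    ∃ l : List (Fin d → ℤ), l.Pairwise (fun z₁ z₂ => lineParam x₀ θ z₂ < lineParam x₀ θ z₁) ∧
      ∀ z, z ∈ l ↔ ‖emb z‖ ≤ r ∧ ∃ t : ℝ, emb z = x₀ + t • θ :=
  ((finite_setOf_norm_emb_le d r).subset fun _ hz => hz.1).exists_list_pairwise_of_injOn
    fun z₁ h₁ z₂ h₂ h => emb_injective <| by
      rw [emb_eq_add_lineParam_smul hθ h₁.2, emb_eq_add_lineParam_smul hθ h₂.2, h]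

theorem pairwise_add_lt_sub_of_disjoint {ρ : (Fin d → ℤ) → ℝ} (hθ : ‖θ‖ = 1)
    (hρ : ∀ z, 0 ≤ ρ z)
    (hdisj : ∀ z₁ z₂ : Fin d → ℤ, ‖emb z₁‖ ≤ r → ‖emb z₂‖ ≤ r → z₁ ≠ z₂ →
      Disjoint (Metric.closedBall (emb z₁) (ρ z₁)) (Metric.closedBall (emb z₂) (ρ z₂)))
    {l : List (Fin d → ℤ)} (hl : l.Pairwise fun z₁ z₂ => lineParam x₀ θ z₂ < lineParam x₀ θ z₁)
    (hmem : ∀ z, z ∈ l ↔ ‖emb z‖ ≤ r ∧ ∃ t : ℝ, emb z = x₀ + t • θ) :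
    l.Pairwise fun z₁ z₂ => lineParam x₀ θ z₂ + ρ z₂ < lineParam x₀ θ z₁ - ρ z₁ :=
  hl.imp_of_mem fun h₁ h₂ h => by
    obtain ⟨hr₁, hon₁⟩ := (hmem _).1 h₁
    obtain ⟨hr₂, hon₂⟩ := (hmem _).1 h₂
    refine add_lt_sub_of_disjoint_closedBall x₀ hθ (hρ _) (hρ _) h ?_
    rw [← emb_eq_add_lineParam_smul hθ hon₁, ← emb_eq_add_lineParam_smul hθ hon₂]
    exact hdisj _ _ hr₂ hr₁ fun he => h.ne (by rw [he])

theorem apply_add_smul_eq_stepSum {n : ℕ} {fdis : (Fin d → ℤ) → Matrix (Fin n) (Fin n) ℂ}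
    {w ρ : (Fin d → ℤ) → ℝ} {f : EuclideanSpace ℝ (Fin d) → Matrix (Fin n) (Fin n) ℂ}
    (hf : ∀ x, f x = ∑ᶠ z ∈ {z : Fin d → ℤ | ‖emb z‖ ≤ r},
      Set.indicator (Metric.closedBall (emb z) (ρ z)) (fun _ => ((w z : ℂ)) • fdis z) x)
    (hθ : ‖θ‖ = 1)
    (hline : ∀ z : Fin d → ℤ, ‖emb z‖ ≤ r →
      (∃ t : ℝ, emb z = x₀ + t • θ) ∨ ∀ s : ℝ, x₀ + s • θ ∉ Metric.closedBall (emb z) (ρ z))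
    {l : List (Fin d → ℤ)} (hl : l.Nodup)
    (hmem : ∀ z, z ∈ l ↔ ‖emb z‖ ≤ r ∧ ∃ t : ℝ, emb z = x₀ + t • θ) (s : ℝ) :
    f (x₀ + s • θ) = stepSum (fun z => lineParam x₀ θ z - ρ z) (fun z => lineParam x₀ θ z + ρ z)
      (fun z => (w z : ℂ) • fdis z) l s := by
  have hl' : {z | z ∈ l} = ↑l.toFinset := by ext; simp
  rw [hf, finsum_mem_inter_support_eq' _ _ {z | z ∈ l}, hl', finsum_mem_coe_finset,
    List.sum_toFinset _ hl]
  · refine congrArg List.sum (List.map_congr_left fun z hz => ?_)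
    rw [emb_eq_add_lineParam_smul hθ ((hmem z).1 hz).2, ← preimage_add_smul_closedBall x₀ hθ]
    exact (indicator_comp_right _).symm
  · intro z hz
    change ‖emb z‖ ≤ r ↔ z ∈ l
    rw [hmem]
    refine ⟨fun hzr => ⟨hzr, (hline z hzr).resolve_right fun hoff => ?_⟩, And.left⟩
    exact hoff s (mem_of_indicator_ne_zero hz)

end Configuration

theorem stmt12_general (d n : ℕ) (r : ℝ)
    (fdis : (Fin d → ℤ) → Matrix (Fin n) (Fin n) ℂ)
    (w : (Fin d → ℤ) → ℝ)
    (ρ : (Fin d → ℤ) → ℝ) (hρ : ∀ z, 0 < ρ z)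
    (hdisj : ∀ z₁ z₂ : Fin d → ℤ, ‖emb z₁‖ ≤ r → ‖emb z₂‖ ≤ r → z₁ ≠ z₂ →
      Disjoint (Metric.closedBall (emb z₁) (ρ z₁)) (Metric.closedBall (emb z₂) (ρ z₂)))
    (f : EuclideanSpace ℝ (Fin d) → Matrix (Fin n) (Fin n) ℂ)
    (hf : ∀ x, f x = ∑ᶠ z ∈ {z : Fin d → ℤ | ‖emb z‖ ≤ r},
      Set.indicator (Metric.closedBall (emb z) (ρ z)) (fun _ => ((w z : ℂ)) • fdis z) x)
    (x₀ θ : EuclideanSpace ℝ (Fin d)) (hθ : ‖θ‖ = 1)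
    (hline : ∀ z : Fin d → ℤ, ‖emb z‖ ≤ r →
      (∃ t : ℝ, emb z = x₀ + t • θ) ∨ ∀ s : ℝ, x₀ + s • θ ∉ Metric.closedBall (emb z) (ρ z)) :
    ∃ R : ℝ, 0 < R ∧ ∃ ψ : ℝ → Matrix (Fin n) (Fin n) ℂ,
      Continuous ψ ∧
      (∃ E : Set ℝ, E.Finite ∧ ∀ s ∉ E, ∀ i j,
        HasDerivAt (fun u => ψ u i j) ((f (x₀ + s • θ) * ψ s) i j) s) ∧
      (∀ s ≤ -R, ψ s = 1) ∧
      (∀ s ≥ R, ψ s =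
        oprodBy (fun z => NormedSpace.exp (((2 * ρ z * w z : ℝ) : ℂ) • fdis z))
          (fun z => ∑ i, ((z i : ℝ) - x₀ i) * θ i)
          {z : Fin d → ℤ | ‖emb z‖ ≤ r ∧ ∃ t : ℝ, emb z = x₀ + t • θ}) := by
  obtain ⟨l, hl, hmem⟩ := exists_list_pairwise_lineParam (r := r) (x₀ := x₀) hθ
  have hsep := pairwise_add_lt_sub_of_disjoint hθ (fun z => (hρ z).le) hdisj hl hmem
  set a := fun z => lineParam x₀ θ z - ρ z
  set b := fun z => lineParam x₀ θ z + ρ z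
  set A := fun z => (w z : ℂ) • fdis z
  -- any submultiplicative norm on matrices will do for the calculus
  let : NormedRing (Matrix (Fin n) (Fin n) ℂ) := Matrix.linftyOpNormedRing
  let : NormedAlgebra ℝ (Matrix (Fin n) (Fin n) ℂ) := Matrix.linftyOpNormedAlgebra
  obtain ⟨R, hR, hleft, hright⟩ :=
    exists_rampProd_eq_one_and_eq_prod_exp (a := a) (b := b) (A := A) (l := l) fun z _ => by
      linarith [hρ z]
  refine ⟨R, hR, rampProd a b A l, continuous_rampProd a b A l,
    ⟨⋃ z ∈ l.toFinset, {a z, b z}, l.toFinset.finite_toSet.biUnion fun z _ => by simp,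
      fun s hs i j => ?_⟩, hleft, fun s hs => ?_⟩
  · rw [apply_add_smul_eq_stepSum hf hθ hline (hl.imp fun h he => h.ne (by rw [he])) hmem]
    refine (hasDerivAt_rampProd hsep fun z hz => ?_).matrix_apply i j
    simp only [mem_iUnion, mem_insert_iff, mem_singleton_iff, not_exists, not_or] at hs
    exact hs z (List.mem_toFinset.2 hz)
  · rw [hright s hs]
    refine (congrArg List.prod (List.map_congr_left fun z _ => congrArg exp ?_)).trans
      (oprodBy_eq_prod _ (lineParam x₀ θ) hl hmem).symm
    simp only [a, b, A]
    rw [← Complex.coe_smul, smul_smul]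
    congr 1
    push_cast
    ring

/-- Proposition 4.1: for f a sum of regularized delta functions (matrix
coefficients times indicators of pairwise disjoint balls centered at the lattice points
of B_r), along any line which either passes through the center of a ball or misses it,
the solution ψ of dψ/ds = f(x₀ + sθ)ψ with ψ = I near −∞ exists and equals, for large s,
the ordered product of exp(2 ρ_z w(z) f^dis(z)) over the lattice points z ∈ γ ∩ B_r ∩ ℤ^d,
the point furthest along the orientation contributing the leftmost factor. -/
theorem stmt12 (d n : ℕ) (hd : 1 ≤ d) (hn : 1 ≤ n) (r : ℝ) (hr : 0 < r)
    (fdis : (Fin d → ℤ) → Matrix (Fin n) (Fin n) ℂ)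
    (hfdis : ∀ z : Fin d → ℤ, ¬ ‖emb z‖ ≤ r → fdis z = 0)
    (w : (Fin d → ℤ) → ℝ) (hw : ∀ z, 0 < w z)
    (ρ : (Fin d → ℤ) → ℝ) (hρ : ∀ z, 0 < ρ z)
    (hdisj : ∀ z₁ z₂ : Fin d → ℤ, ‖emb z₁‖ ≤ r → ‖emb z₂‖ ≤ r → z₁ ≠ z₂ →
      Disjoint (Metric.closedBall (emb z₁) (ρ z₁)) (Metric.closedBall (emb z₂) (ρ z₂)))
    (f : EuclideanSpace ℝ (Fin d) → Matrix (Fin n) (Fin n) ℂ)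
    (hf : ∀ x, f x = ∑ᶠ z ∈ {z : Fin d → ℤ | ‖emb z‖ ≤ r},
      Set.indicator (Metric.closedBall (emb z) (ρ z)) (fun _ => ((w z : ℂ)) • fdis z) x)
    (x₀ θ : EuclideanSpace ℝ (Fin d)) (hθ : ‖θ‖ = 1)
    (hline : ∀ z : Fin d → ℤ, ‖emb z‖ ≤ r →
      (∃ t : ℝ, emb z = x₀ + t • θ) ∨ ∀ s : ℝ, x₀ + s • θ ∉ Metric.closedBall (emb z) (ρ z)) :
    ∃ R : ℝ, 0 < R ∧ ∃ ψ : ℝ → Matrix (Fin n) (Fin n) ℂ,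
      Continuous ψ ∧
      (∃ E : Set ℝ, E.Finite ∧ ∀ s ∉ E, ∀ i j,
        HasDerivAt (fun u => ψ u i j) ((f (x₀ + s • θ) * ψ s) i j) s) ∧
      (∀ s ≤ -R, ψ s = 1) ∧
      (∀ s ≥ R, ψ s =
        oprodBy (fun z => NormedSpace.exp (((2 * ρ z * w z : ℝ) : ℂ) • fdis z))
          (fun z => ∑ i, ((z i : ℝ) - x₀ i) * θ i)
          {z : Fin d → ℤ | ‖emb z‖ ≤ r ∧ ∃ t : ℝ, emb z = x₀ + t • θ}) :=
  stmt12_general d n r fdis w ρ hρ hdisj f hf x₀ θ hθ hline
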